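/- arXiv:2109.12555 — 3 statements merged into one kernel-verified Lean document; each statement's English description precedes it below -/
import Mathlib

section
/- Let W define a structurally imbalanced, connected signed network with signed Laplacian L, let L^δ = L + diag(δ), and let λ₁ denote the smallest eigenvalue of L^δ. Then: (Case 1) if k ∈ ℝⁿ satisfies k_i > δ_i − λ₁ for every i, then L + diag(k) is positive definite, and the compensated network achieves trivial consensus (every trajectory x(t) = e^{−t(L+diag(k))}x(0) converges to 0); (Case 2) if k ∈ ℝⁿ satisfies k_i < δ_i − λ₁ for every i, then L + diag(k) has a negative eigenvalue, and the compensated network ẋ = −(L+diag(k))x is unstable. -/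
open Matrix Finset Filter

/-- The signed Laplacian of a signed network with weight matrix `W`. -/
noncomputable def signedLaplacian {n : ℕ} (W : Matrix (Fin n) (Fin n) ℝ) :
    Matrix (Fin n) (Fin n) ℝ :=
  Matrix.of fun i j => if i = j then ∑ k, W i k else -W i j

/-- The number of negative eigenvalues (with multiplicity) of a Hermitian real matrix. -/
noncomputable def negEigCount {n : ℕ} (L : Matrix (Fin n) (Fin n) ℝ)
    (hL : L.IsHermitian) : ℕ :=
  letI := Classical.decPred (fun i : Fin n => hL.eigenvalues i < 0)
  (Finset.univ.filter fun i : Fin n => hL.eigenvalues i < 0).card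

/-- The underlying simple graph of a signed network: `i` and `j` are adjacent
iff they are distinct and `W i j ≠ 0`. -/
def underlyingGraph {n : ℕ} (W : Matrix (Fin n) (Fin n) ℝ) : SimpleGraph (Fin n) :=
  SimpleGraph.fromRel (fun i j => W i j ≠ 0)

/-- The number of negative edges of a signed network: the number of unordered
pairs `{i, j}` with `W i j < 0` (counted via ordered pairs with `i < j`). -/
noncomputable def negEdgeCount {n : ℕ} (W : Matrix (Fin n) (Fin n) ℝ) : ℕ :=
  letI := Classical.decPred (fun p : Fin n × Fin n => p.1 < p.2 ∧ W p.1 p.2 < 0)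
  (Finset.univ.filter fun p : Fin n × Fin n => p.1 < p.2 ∧ W p.1 p.2 < 0).card

/-- The compensation threshold vector `δ`, with `δ i = Σ_j (|W i j| − W i j)`. -/
noncomputable def deltaVec {n : ℕ} (W : Matrix (Fin n) (Fin n) ℝ) : Fin n → ℝ :=
  fun i => ∑ j, (|W i j| - W i j)

/-- A signed network is structurally balanced if some ±1 sign vector `g`
makes all the products `g i * W i j * g j` nonnegative. -/
def StructurallyBalanced {n : ℕ} (W : Matrix (Fin n) (Fin n) ℝ) : Prop :=
  ∃ g : Fin n → ℝ, (∀ i, g i = 1 ∨ g i = -1) ∧ ∀ i j, 0 ≤ g i * W i j * g j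

section Helpers
variable {n : ℕ}


lemma myDotMulVec (U : Matrix (Fin n) (Fin n) ℝ) (x z : Fin n → ℝ) :
    x ⬝ᵥ (U *ᵥ z) = ((star U) *ᵥ x) ⬝ᵥ z := by
  simp only [dotProduct, Matrix.mulVec, Matrix.star_apply, star_trivial,
    Finset.mul_sum, Finset.sum_mul, dotProduct]
  rw [Finset.sum_comm]
  apply Finset.sum_congr rfl; intro i _
  apply Finset.sum_congr rfl; intro j _
  ring

lemma myQuad (A : Matrix (Fin n) (Fin n) ℝ) (hA : A.IsHermitian) (x : Fin n → ℝ) :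
    x ⬝ᵥ (A *ᵥ x) = ∑ j, hA.eigenvalues j *
      (((star (hA.eigenvectorUnitary : Matrix (Fin n) (Fin n) ℝ)) *ᵥ x) j)^2 := by
  set U : Matrix (Fin n) (Fin n) ℝ := (hA.eigenvectorUnitary : Matrix (Fin n) (Fin n) ℝ)
  set y := (star U) *ᵥ x with hy
  conv_lhs => rw [hA.spectral_theorem]
  rw [Unitary.conjStarAlgAut_apply, ← Matrix.mulVec_mulVec, ← Matrix.mulVec_mulVec, myDotMulVec]
  simp only [dotProduct, Matrix.mulVec_diagonal, Function.comp,
    RCLike.ofReal_real_eq_id, id_eq]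
  apply Finset.sum_congr rfl; intro j _
  ring

lemma myNormSq (A : Matrix (Fin n) (Fin n) ℝ) (hA : A.IsHermitian) (x : Fin n → ℝ) :
    x ⬝ᵥ x = ∑ j, (((star (hA.eigenvectorUnitary : Matrix (Fin n) (Fin n) ℝ)) *ᵥ x) j)^2 := by
  set U : Matrix (Fin n) (Fin n) ℝ := (hA.eigenvectorUnitary : Matrix (Fin n) (Fin n) ℝ)
  have h1 : ((star U) *ᵥ x) ⬝ᵥ ((star U) *ᵥ x) = x ⬝ᵥ x := by
    have := myDotMulVec (star U) ((star U) *ᵥ x) x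
    rw [star_star] at this
    rw [dotProduct_comm, this, Matrix.mulVec_mulVec]
    have : U * star U = 1 := by
      exact (Matrix.mem_unitaryGroup_iff).mp hA.eigenvectorUnitary.2
    rw [this, Matrix.one_mulVec]
  rw [← h1]
  simp only [dotProduct]
  apply Finset.sum_congr rfl; intro j _
  ring


lemma myExpFormula (A : Matrix (Fin n) (Fin n) ℝ) (hA : A.IsHermitian) (t : ℝ) :
    NormedSpace.exp ((-t) • A) =
      (hA.eigenvectorUnitary : Matrix (Fin n) (Fin n) ℝ)
        * Matrix.diagonal (fun j => Real.exp (-t * hA.eigenvalues j))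
        * star (hA.eigenvectorUnitary : Matrix (Fin n) (Fin n) ℝ) := by
  set U : Matrix (Fin n) (Fin n) ℝ := (hA.eigenvectorUnitary : Matrix (Fin n) (Fin n) ℝ) with hUdef
  have hmul : U * star U = 1 := (Matrix.mem_unitaryGroup_iff).mp hA.eigenvectorUnitary.2
  have hinv : U⁻¹ = star U := Matrix.inv_eq_right_inv hmul
  have hmul' : star U * U = 1 := (Matrix.mem_unitaryGroup_iff').mp hA.eigenvectorUnitary.2
  have hU : IsUnit U := ⟨⟨U, star U, hmul, hmul'⟩, rfl⟩
  have h1 : (-t) • A = U * ((-t) • Matrix.diagonal (RCLike.ofReal ∘ hA.eigenvalues)) * U⁻¹ := by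
    rw [hinv]
    conv_lhs => rw [hA.spectral_theorem]
    rw [Unitary.conjStarAlgAut_apply, Matrix.mul_smul, Matrix.smul_mul]
  rw [h1, Matrix.exp_conj _ _ hU, hinv]
  congr 1
  congr 1
  have h2 : (-t) • Matrix.diagonal (RCLike.ofReal ∘ hA.eigenvalues)
      = Matrix.diagonal (fun j => -t * hA.eigenvalues j) := by
    rw [← Matrix.diagonal_smul]
    congr 1
  rw [h2, Matrix.exp_diagonal, Pi.exp_def]
  funext j
  rw [← Real.exp_eq_exp_ℝ]

lemma myExpMulVec (A : Matrix (Fin n) (Fin n) ℝ) (hA : A.IsHermitian) (t : ℝ) (x0 : Fin n → ℝ) :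
    (NormedSpace.exp ((-t) • A)) *ᵥ x0 =
      (hA.eigenvectorUnitary : Matrix (Fin n) (Fin n) ℝ) *ᵥ
        (fun j => Real.exp (-t * hA.eigenvalues j) *
          (((star (hA.eigenvectorUnitary : Matrix (Fin n) (Fin n) ℝ)) *ᵥ x0) j)) := by
  rw [myExpFormula A hA t, ← Matrix.mulVec_mulVec, ← Matrix.mulVec_mulVec]
  have harg : (Matrix.diagonal (fun j => Real.exp (-t * hA.eigenvalues j))) *ᵥ
      ((star (hA.eigenvectorUnitary : Matrix (Fin n) (Fin n) ℝ)) *ᵥ x0)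
      = fun j => Real.exp (-t * hA.eigenvalues j) *
          (((star (hA.eigenvectorUnitary : Matrix (Fin n) (Fin n) ℝ)) *ᵥ x0) j) := by
    funext j
    rw [Matrix.mulVec_diagonal]
  rw [harg]


-- quadratic form of A + diagonal d
lemma myQuadDiag (A : Matrix (Fin n) (Fin n) ℝ) (d : Fin n → ℝ) (x : Fin n → ℝ) :
    x ⬝ᵥ ((A + Matrix.diagonal d) *ᵥ x) = x ⬝ᵥ (A *ᵥ x) + ∑ i, d i * (x i)^2 := by
  rw [Matrix.add_mulVec, dotProduct_add]
  congr 1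
  simp only [dotProduct, Matrix.mulVec_diagonal]
  apply Finset.sum_congr rfl; intro i _
  ring

-- eigenvalues of Hermitian matrix are eigenvalues of toLin'
lemma myHasEig (A : Matrix (Fin n) (Fin n) ℝ) (hA : A.IsHermitian) (j : Fin n) :
    Module.End.HasEigenvalue (Matrix.toLin' A) (hA.eigenvalues j) := by
  apply Module.End.hasEigenvalue_of_hasEigenvector (x := ⇑(hA.eigenvectorBasis j))
  constructor
  · rw [Module.End.mem_eigenspace_iff, Matrix.toLin'_apply, hA.mulVec_eigenvectorBasis]
  · intro h
    apply hA.eigenvectorBasis.orthonormal.ne_zero j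
    ext a
    exact congrFun h a

end Helpers

theorem imbalanced_compensation_dichotomy
    {n : ℕ} (W : Matrix (Fin n) (Fin n) ℝ)
    (hsymm : W.IsSymm) (hdiag : ∀ i, W i i = 0)
    (hconn : (underlyingGraph W).Connected)
    (himbal : ¬ StructurallyBalanced W)
    (L : Matrix (Fin n) (Fin n) ℝ) (hLdef : L = signedLaplacian W)
    (lam : ℝ)
    (hlam : Module.End.HasEigenvalue
      (Matrix.toLin' (L + Matrix.diagonal (deltaVec W))) lam)
    (hlam_min : ∀ μ : ℝ, Module.End.HasEigenvalue
      (Matrix.toLin' (L + Matrix.diagonal (deltaVec W))) μ → lam ≤ μ) :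
    (∀ k : Fin n → ℝ, (∀ i, deltaVec W i - lam < k i) →
      (L + Matrix.diagonal k).PosDef ∧
      (∀ x0 : Fin n → ℝ, Filter.Tendsto
        (fun t : ℝ => (NormedSpace.exp ((-t) • (L + Matrix.diagonal k))).mulVec x0)
        Filter.atTop (nhds 0))) ∧
    (∀ k : Fin n → ℝ, ∀ hLk : (L + Matrix.diagonal k).IsHermitian,
      (∀ i, k i < deltaVec W i - lam) →
      (∃ i, hLk.eigenvalues i < 0) ∧
      (∃ x0 : Fin n → ℝ, ∀ C : ℝ, ∃ t : ℝ, 0 ≤ t ∧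
        C < ‖(NormedSpace.exp ((-t) • (L + Matrix.diagonal k))).mulVec x0‖)) := by
  classical
  have hLh : L.IsHermitian := by
    rw [hLdef]
    show (signedLaplacian W)ᴴ = signedLaplacian W
    ext i j
    by_cases hij : i = j
    · subst hij; simp [Matrix.conjTranspose_apply, signedLaplacian]
    · have hW : W j i = W i j := by
        have := congrFun (congrFun hsymm i) j
        simpa [Matrix.transpose_apply] using this
      simp [Matrix.conjTranspose_apply, signedLaplacian, hij, Ne.symm hij, hW]
  set M := L + Matrix.diagonal (deltaVec W) with hM_def
  have hMh : M.IsHermitian := hLh.add (Matrix.isHermitian_diagonal _)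
  have hlamle : ∀ j, lam ≤ hMh.eigenvalues j := fun j => hlam_min _ (myHasEig M hMh j)
  have hRay : ∀ x : Fin n → ℝ, lam * (x ⬝ᵥ x) ≤ x ⬝ᵥ (M *ᵥ x) := by
    intro x
    rw [myQuad M hMh x, myNormSq M hMh x, Finset.mul_sum]
    exact Finset.sum_le_sum fun j _ => mul_le_mul_of_nonneg_right (hlamle j) (sq_nonneg _)
  have key : ∀ (k : Fin n → ℝ) (x : Fin n → ℝ),
      x ⬝ᵥ ((L + Matrix.diagonal k) *ᵥ x) =
        x ⬝ᵥ (M *ᵥ x) + ∑ i, (k i - deltaVec W i) * (x i)^2 := by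
    intro k x
    have hsplit : L + Matrix.diagonal k
        = M + Matrix.diagonal (fun i => k i - deltaVec W i) := by
      rw [hM_def, add_assoc, Matrix.diagonal_add]
      congr 1
      congr 1
      funext i
      ring
    rw [hsplit, myQuadDiag]
  have hcomb : ∀ (k x : Fin n → ℝ),
      lam * (x ⬝ᵥ x) + ∑ i, (k i - deltaVec W i) * x i ^ 2
        = ∑ i, (lam + k i - deltaVec W i) * x i ^ 2 := by
    intro k x
    simp only [dotProduct]
    rw [Finset.mul_sum, ← Finset.sum_add_distrib]
    apply Finset.sum_congr rfl
    intro i _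
    ring
  constructor
  · -- Case 1
    intro k hk
    have hpos : ∀ x : Fin n → ℝ, x ≠ 0 → 0 < x ⬝ᵥ ((L + Matrix.diagonal k) *ᵥ x) := by
      intro x hx
      rw [key k x]
      have h1 : lam * (x ⬝ᵥ x) + ∑ i, (k i - deltaVec W i) * x i ^ 2
          ≤ x ⬝ᵥ (M *ᵥ x) + ∑ i, (k i - deltaVec W i) * x i ^ 2 :=
        add_le_add_left (hRay x) _
      refine lt_of_lt_of_le ?_ h1
      rw [hcomb k x]
      obtain ⟨i0, hi0⟩ : ∃ i, x i ≠ 0 := by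
        by_contra hc; push_neg at hc; exact hx (funext hc)
      apply Finset.sum_pos'
      · intro i _
        have hki : 0 < lam + k i - deltaVec W i := by have := hk i; linarith
        positivity
      · refine ⟨i0, Finset.mem_univ _, ?_⟩
        have hki : 0 < lam + k i0 - deltaVec W i0 := by have := hk i0; linarith
        have hx2 : 0 < x i0 ^ 2 := by positivity
        positivity
    have hPD : (L + Matrix.diagonal k).PosDef := by
      refine Matrix.PosDef.of_dotProduct_mulVec_pos (hLh.add (Matrix.isHermitian_diagonal _)) fun x hx => ?_
      simpa using hpos x hx
    refine ⟨hPD, ?_⟩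
    intro x0
    set A := L + Matrix.diagonal k with hA_def
    have hAh : A.IsHermitian := hPD.1
    have heigpos : ∀ j, 0 < hAh.eigenvalues j := fun j => hPD.eigenvalues_pos j
    have heq : (fun t : ℝ => (NormedSpace.exp ((-t) • A)) *ᵥ x0)
        = fun t : ℝ => (hAh.eigenvectorUnitary : Matrix (Fin n) (Fin n) ℝ) *ᵥ
            (fun j => Real.exp (-t * hAh.eigenvalues j) *
              (((star (hAh.eigenvectorUnitary : Matrix (Fin n) (Fin n) ℝ)) *ᵥ x0) j)) := by
      funext t
      exact myExpMulVec A hAh t x0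
    rw [heq]
    have h0 : Filter.Tendsto (fun t : ℝ => (fun j => Real.exp (-t * hAh.eigenvalues j) *
        (((star (hAh.eigenvectorUnitary : Matrix (Fin n) (Fin n) ℝ)) *ᵥ x0) j)))
        Filter.atTop (nhds 0) := by
      rw [tendsto_pi_nhds]
      intro j
      have hexp : Filter.Tendsto (fun t : ℝ => Real.exp (-t * hAh.eigenvalues j))
          Filter.atTop (nhds 0) := by
        apply Real.tendsto_exp_atBot.comp
        have hrw : (fun t : ℝ => -t * hAh.eigenvalues j)
            = fun t : ℝ => t * (-(hAh.eigenvalues j)) := by funext t; ring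
        rw [hrw]
        exact Filter.tendsto_id.atTop_mul_const_of_neg' (by linarith [heigpos j])
      have := hexp.mul_const (((star (hAh.eigenvectorUnitary : Matrix (Fin n) (Fin n) ℝ)) *ᵥ x0) j)
      simpa using this
    have hcont : Continuous fun v : Fin n → ℝ =>
        (hAh.eigenvectorUnitary : Matrix (Fin n) (Fin n) ℝ) *ᵥ v := by
      have : (fun v : Fin n → ℝ => (hAh.eigenvectorUnitary : Matrix (Fin n) (Fin n) ℝ) *ᵥ v)
          = ⇑((hAh.eigenvectorUnitary : Matrix (Fin n) (Fin n) ℝ).mulVecLin) := by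
        funext v; simp [Matrix.mulVecLin_apply]
      rw [this]
      exact LinearMap.continuous_of_finiteDimensional _
    have := (hcont.tendsto 0).comp h0
    simpa [Function.comp_def, Matrix.mulVec_zero] using this
  · -- Case 2
    intro k hLk hk
    obtain ⟨v, hv⟩ := hlam.exists_hasEigenvector
    have hv1 : M *ᵥ v = lam • v := by
      have := hv.apply_eq_smul
      rwa [Matrix.toLin'_apply] at this
    have hvne : v ≠ 0 := hv.2
    have hq : v ⬝ᵥ ((L + Matrix.diagonal k) *ᵥ v) < 0 := by
      rw [key k v]
      have h1 : v ⬝ᵥ (M *ᵥ v) = lam * (v ⬝ᵥ v) := by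
        rw [hv1]
        simp [dotProduct_smul, smul_eq_mul]
      rw [h1, hcomb k v]
      obtain ⟨i0, hi0⟩ : ∃ i, v i ≠ 0 := by
        by_contra hc; push_neg at hc; exact hvne (funext hc)
      have := Finset.sum_lt_sum (s := Finset.univ)
        (f := fun i => (lam + k i - deltaVec W i) * v i ^ 2)
        (g := fun _ => (0 : ℝ))
        (by
          intro i _
          have hki : lam + k i - deltaVec W i < 0 := by have := hk i; linarith
          exact mul_nonpos_iff.mpr (Or.inr ⟨hki.le, sq_nonneg _⟩))
        (⟨i0, Finset.mem_univ _, by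
          have hki : lam + k i0 - deltaVec W i0 < 0 := by have := hk i0; linarith
          have hv2 : 0 < v i0 ^ 2 := by positivity
          exact mul_neg_of_neg_of_pos hki hv2⟩)
      simpa using this
    have hneg : ∃ i, hLk.eigenvalues i < 0 := by
      by_contra hc
      push_neg at hc
      have hpsd := hLk.posSemidef_iff_eigenvalues_nonneg.mpr hc
      have := hpsd.dotProduct_mulVec_nonneg v
      simp only [star_trivial] at this
      linarith
    refine ⟨hneg, ?_⟩
    obtain ⟨i, hi⟩ := hneg
    refine ⟨⇑(hLk.eigenvectorBasis i), ?_⟩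
    intro C
    have hx0eq : ∀ t : ℝ,
        (NormedSpace.exp ((-t) • (L + Matrix.diagonal k))) *ᵥ ⇑(hLk.eigenvectorBasis i)
          = Real.exp (-t * hLk.eigenvalues i) • ⇑(hLk.eigenvectorBasis i) := by
      intro t
      rw [myExpMulVec _ hLk t _]
      rw [hLk.star_eigenvectorUnitary_mulVec i]
      have hsingle : (fun j => Real.exp (-t * hLk.eigenvalues j) * (Pi.single i (1:ℝ) : Fin n → ℝ) j)
          = Real.exp (-t * hLk.eigenvalues i) • (Pi.single i (1:ℝ) : Fin n → ℝ) := by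
        funext j
        by_cases h : j = i
        · subst h; simp
        · simp [Pi.single_eq_of_ne h]
      rw [hsingle, Matrix.mulVec_smul, hLk.eigenvectorUnitary_mulVec i]
    have hne : (⇑(hLk.eigenvectorBasis i) : Fin n → ℝ) ≠ 0 := by
      intro h
      apply hLk.eigenvectorBasis.orthonormal.ne_zero i
      ext a
      exact congrFun h a
    have hnorm : 0 < ‖(⇑(hLk.eigenvectorBasis i) : Fin n → ℝ)‖ := norm_pos_iff.mpr hne
    have htend : Filter.Tendsto (fun t : ℝ => Real.exp (-t * hLk.eigenvalues i) *
        ‖(⇑(hLk.eigenvectorBasis i) : Fin n → ℝ)‖) Filter.atTop Filter.atTop := by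
      apply Filter.Tendsto.atTop_mul_const' hnorm
      apply Real.tendsto_exp_atTop.comp
      have hrw : (fun t : ℝ => -t * hLk.eigenvalues i)
          = fun t : ℝ => t * (-(hLk.eigenvalues i)) := by funext t; ring
      rw [hrw]
      exact Filter.tendsto_id.atTop_mul_const' (by linarith)
    obtain ⟨t, ht⟩ := ((htend.eventually_gt_atTop C).and (Filter.eventually_ge_atTop (0:ℝ))).exists
    refine ⟨t, ht.2, ?_⟩
    show C < ‖(NormedSpace.exp ((-t) • (L + Matrix.diagonal k))) *ᵥ ⇑(hLk.eigenvectorBasis i)‖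
    rw [hx0eq t, norm_smul]
    have : ‖Real.exp (-t * hLk.eigenvalues i)‖ = Real.exp (-t * hLk.eigenvalues i) := by
      rw [Real.norm_eq_abs, abs_of_pos (Real.exp_pos _)]
    rw [this]
    exact ht.1
end

section
/- Let W define a structurally balanced, strongly connected, directed signed network with signed Laplacian L, and let k ∈ ℝⁿ be a compensation vector with k ≥ δ entrywise and k ≠ δ. Then every eigenvalue of the compensated Laplacian L^k = L + diag(k) over ℂ has strictly positive real part; equivalently, the compensated network achieves trivial consensus: for every initial state x(0) ∈ ℝⁿ the trajectory x(t) = e^{−t L^k} x(0) converges to the zero vector as t → ∞. -/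
open Matrix Finset Filter
open scoped Nat

/-- A directed signed network is strongly connected if every node can reach
every other node along directed edges (nonzero entries of `W`). -/
def StronglyConnected {n : ℕ} (W : Matrix (Fin n) (Fin n) ℝ) : Prop :=
  ∀ i j : Fin n, Relation.ReflTransGen (fun a b => W a b ≠ 0) i j

/-- aux: decay of the matrix exponential when the spectrum is in the right half plane -/
lemma complex_decay_aux {n : ℕ} (B : Matrix (Fin n) (Fin n) ℂ)
    (h : ∀ μ ∈ spectrum ℂ B, 0 < μ.re) (z0 : Fin n → ℂ) :
    Filter.Tendsto (fun t : ℝ => (NormedSpace.exp ((-(t : ℂ)) • B)).mulVec z0)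
      Filter.atTop (nhds 0) := by
  letI : SeminormedRing (Matrix (Fin n) (Fin n) ℂ) := Matrix.linftyOpSemiNormedRing
  letI : NormedRing (Matrix (Fin n) (Fin n) ℂ) := Matrix.linftyOpNormedRing
  letI : NormedAlgebra ℂ (Matrix (Fin n) (Fin n) ℂ) := Matrix.linftyOpNormedAlgebra
  set S : Submodule ℂ (Fin n → ℂ) :=
    { carrier := {z | Filter.Tendsto (fun t : ℝ =>
        (NormedSpace.exp ((-(t : ℂ)) • B)).mulVec z) Filter.atTop (nhds 0)}
      add_mem' := by
        intro a b ha hb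
        simpa [Matrix.mulVec_add] using ha.add hb
      zero_mem' := by
        simpa [Matrix.mulVec_zero] using (tendsto_const_nhds :
          Filter.Tendsto (fun _ : ℝ => (0 : Fin n → ℂ)) Filter.atTop (nhds 0))
      smul_mem' := by
        intro c z hz
        simpa [Matrix.mulVec_smul] using hz.const_smul c } with hSdef
  have hmem : ∀ z, z ∈ S := by
    intro z
    have htop := Module.End.iSup_maxGenEigenspace_eq_top (Matrix.toLinAlgEquiv' B)
    have hle : (⨆ μ : ℂ, Module.End.maxGenEigenspace (Matrix.toLinAlgEquiv' B) μ) ≤ S := by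
      apply iSup_le
      intro μ z hz
      rw [Module.End.mem_maxGenEigenspace] at hz
      obtain ⟨m, hm⟩ := hz
      rcases eq_or_ne z 0 with rfl | hz0
      · exact S.zero_mem
      · -- μ is in the spectrum of B
        have hmemgen : z ∈ Module.End.genEigenspace (Matrix.toLinAlgEquiv' B) μ (m : ℕ∞) := by
          rw [Module.End.genEigenspace_nat]
          exact hm
        have heig : Module.End.HasEigenvalue (Matrix.toLinAlgEquiv' B) μ :=
          Module.End.hasEigenvalue_of_hasGenEigenvalue (k := m)
            (by
              rw [Module.End.hasGenEigenvalue_iff]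
              exact fun hbot => hz0 (by simpa [hbot] using hmemgen))
        have hμspec : μ ∈ spectrum ℂ B := by
          have := Module.End.hasEigenvalue_iff_mem_spectrum.mp heig
          rwa [AlgEquiv.spectrum_eq (Matrix.toLinAlgEquiv' (R := ℂ)) B] at this
        have hre : 0 < μ.re := h μ hμspec
        -- the kernel property for the matrix
        set C : Matrix (Fin n) (Fin n) ℂ := B - μ • 1 with hCdef
        have hmat : (C ^ m).mulVec z = 0 := by
          have hEq : (Matrix.toLinAlgEquiv' B - μ • 1) ^ m
              = Matrix.toLinAlgEquiv' (C ^ m) := by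
            rw [hCdef]
            simp only [map_pow, map_sub, _root_.map_smul, _root_.map_one]
          rw [hEq, Matrix.toLinAlgEquiv'_apply] at hm
          exact hm
        have hker : ∀ j, m ≤ j → (C ^ j).mulVec z = 0 := by
          intro j hj
          have : C ^ j = C ^ (j - m) * C ^ m := by
            rw [← pow_add]
            congr 1
            omega
          rw [this, ← Matrix.mulVec_mulVec, hmat, Matrix.mulVec_zero]
        -- trajectory formula
        have key : ∀ t : ℝ, (NormedSpace.exp ((-(t : ℂ)) • B)).mulVec z
            = ∑ j ∈ Finset.range m,
              (Complex.exp (-(t : ℂ) * μ) * ((j ! : ℂ)⁻¹ * (-(t : ℂ)) ^ j)) •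
                (C ^ j).mulVec z := by
          intro t
          have hsplit : (-(t : ℂ)) • B
              = (-(t : ℂ)) • C + (-(t : ℂ) * μ) • (1 : Matrix (Fin n) (Fin n) ℂ) := by
            rw [hCdef, smul_sub, smul_smul]
            abel
          have hcomm : Commute ((-(t : ℂ)) • C)
              ((-(t : ℂ) * μ) • (1 : Matrix (Fin n) (Fin n) ℂ)) :=
            ((Commute.one_right C).smul_left _).smul_right _
          rw [hsplit, Matrix.exp_add_of_commute _ _ hcomm]
          have hscal : NormedSpace.exp ((-(t : ℂ) * μ) • (1 : Matrix (Fin n) (Fin n) ℂ))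
              = Complex.exp (-(t : ℂ) * μ) • (1 : Matrix (Fin n) (Fin n) ℂ) := by
            rw [← Algebra.algebraMap_eq_smul_one]
            erw [← NormedSpace.map_exp (algebraMap ℂ (Matrix (Fin n) (Fin n) ℂ))
                (continuous_algebraMap _ _)]
            rw [← Complex.exp_eq_exp_ℂ, Algebra.algebraMap_eq_smul_one]
          rw [hscal, mul_smul_comm, mul_one, Matrix.smul_mulVec]
          -- expand the exponential of the nilpotent-on-z part
          let ψ : Matrix (Fin n) (Fin n) ℂ →ₗ[ℂ] (Fin n → ℂ) :=
            { toFun := fun X => X.mulVec z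
              map_add' := fun X Y => Matrix.add_mulVec X Y z
              map_smul' := fun c X => Matrix.smul_mulVec c X z }
          have hψcont : Continuous ψ := LinearMap.continuous_of_finiteDimensional ψ
          have hsum := NormedSpace.expSeries_summable' (𝕂 := ℂ) ((-(t : ℂ)) • C)
          have hexp : (NormedSpace.exp ((-(t : ℂ)) • C)).mulVec z
              = ∑' j : ℕ, ((j ! : ℂ)⁻¹ • ((-(t : ℂ)) • C) ^ j).mulVec z := by
            rw [NormedSpace.exp_eq_tsum ℂ]
            exact ((hsum.hasSum.map ψ hψcont).tsum_eq).symm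
          rw [hexp, tsum_eq_sum (s := Finset.range m) ?_, Finset.smul_sum]
          · refine Finset.sum_congr rfl fun j hj => ?_
            rw [smul_pow, smul_smul, Matrix.smul_mulVec, smul_smul]
          · intro j hj
            have hj' : m ≤ j := by simpa using hj
            rw [smul_pow, smul_smul, Matrix.smul_mulVec, hker j hj', smul_zero]
        -- convergence of each term
        have hterm : ∀ j, 0 < μ.re → Filter.Tendsto
            (fun t : ℝ => (Complex.exp (-(t : ℂ) * μ) * ((j ! : ℂ)⁻¹ * (-(t : ℂ)) ^ j)) •
              (C ^ j).mulVec z) Filter.atTop (nhds 0) := by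
          intro j hre'
          have hg : Filter.Tendsto
              (fun t : ℝ => (j ! : ℝ)⁻¹ * (t ^ j * Real.exp (-μ.re * t)))
              Filter.atTop (nhds 0) := by
            have h1 := tendsto_rpow_mul_exp_neg_mul_atTop_nhds_zero (j : ℝ) μ.re hre'
            have h2 : Filter.Tendsto (fun x : ℝ => x ^ j * Real.exp (-μ.re * x))
                Filter.atTop (nhds 0) := by
              refine h1.congr' ?_
              filter_upwards [eventually_gt_atTop (0 : ℝ)] with x hx
              rw [Real.rpow_natCast]
            simpa using h2.const_mul ((j ! : ℝ)⁻¹)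
          have hsc : Filter.Tendsto
              (fun t : ℝ => Complex.exp (-(t : ℂ) * μ) * ((j ! : ℂ)⁻¹ * (-(t : ℂ)) ^ j))
              Filter.atTop (nhds 0) := by
            apply squeeze_zero_norm' ?_ hg
            filter_upwards [eventually_ge_atTop (0 : ℝ)] with t ht
            rw [norm_mul, norm_mul, norm_pow, norm_neg]
            have h1 : ‖Complex.exp (-(t : ℂ) * μ)‖ = Real.exp (-μ.re * t) := by
              rw [Complex.norm_exp]
              congr 1
              simp [Complex.mul_re]
              ring
            have h2 : ‖((j ! : ℂ))⁻¹‖ = (j ! : ℝ)⁻¹ := by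
              rw [norm_inv]
              norm_cast
            have h3 : ‖(t : ℂ)‖ = t := by
              rw [Complex.norm_real, Real.norm_eq_abs, abs_of_nonneg ht]
            rw [h1, h2, h3]
            ring_nf
            exact le_refl _
          have := hsc.smul_const ((C ^ j).mulVec z)
          simpa using this
        have htend : Filter.Tendsto (fun t : ℝ =>
            (NormedSpace.exp ((-(t : ℂ)) • B)).mulVec z) Filter.atTop (nhds 0) := by
          have hsum : Filter.Tendsto (fun t : ℝ => ∑ j ∈ Finset.range m,
              (Complex.exp (-(t : ℂ) * μ) * ((j ! : ℂ)⁻¹ * (-(t : ℂ)) ^ j)) •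
                (C ^ j).mulVec z) Filter.atTop (nhds (∑ j ∈ Finset.range m, (0 : Fin n → ℂ))) :=
            tendsto_finset_sum _ fun j _ => hterm j hre
          have h' := Filter.Tendsto.congr (fun t => (key t).symm) hsum
          simpa using h'
        exact htend
    have h2 := htop ▸ hle
    exact h2 Submodule.mem_top
  exact hmem z0

lemma spec_re_pos_aux {n : ℕ} (W : Matrix (Fin n) (Fin n) ℝ) (hdiag : ∀ i, W i i = 0)
    (hsc : StronglyConnected W) (hbal : StructurallyBalanced W)
    (k : Fin n → ℝ) (hkge : ∀ i, deltaVec W i ≤ k i) (hkne : k ≠ deltaVec W) :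
    ∀ μ ∈ spectrum ℂ
      ((signedLaplacian W + Matrix.diagonal k).map (Complex.ofReal : ℝ → ℂ)), 0 < μ.re := by
  intro μ hμ
  by_contra hre0
  push_neg at hre0
  set A : Matrix (Fin n) (Fin n) ℝ := signedLaplacian W + Matrix.diagonal k with hAdef
  set B : Matrix (Fin n) (Fin n) ℂ := A.map (Complex.ofReal : ℝ → ℂ) with hBdef
  set d : Fin n → ℝ := fun i => (∑ m, W i m) + k i with hd
  set r : Fin n → ℝ := fun i => ∑ j, |W i j| with hr
  have hA : ∀ i j, A i j = if i = j then d i else -W i j := by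
    intro i j
    by_cases hij : i = j
    · subst hij
      simp [hAdef, signedLaplacian, Matrix.add_apply, hd]
    · simp [hAdef, signedLaplacian, Matrix.add_apply, hij, Matrix.diagonal_apply_ne _ hij]
  -- eigenvector
  have hdet : (μ • (1 : Matrix (Fin n) (Fin n) ℂ) - B).det = 0 := by
    have h1 : ¬ IsUnit (μ • (1 : Matrix (Fin n) (Fin n) ℂ) - B) := by
      have := spectrum.mem_iff.mp hμ
      rwa [Algebra.algebraMap_eq_smul_one] at this
    by_contra hdne
    exact h1 ((Matrix.isUnit_iff_isUnit_det _).mpr (isUnit_iff_ne_zero.mpr hdne))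
  obtain ⟨v, hv0, hveq⟩ := (Matrix.exists_mulVec_eq_zero_iff).mpr hdet
  have hvB : ∀ i, B.mulVec v i = μ * v i := by
    intro i
    have h2 : (μ • (1 : Matrix (Fin n) (Fin n) ℂ) - B).mulVec v i = 0 := by rw [hveq]; rfl
    rw [Matrix.sub_mulVec, Matrix.smul_mulVec, Matrix.one_mulVec] at h2
    have h3 : μ • v i - B.mulVec v i = 0 := h2
    have := sub_eq_zero.mp h3
    simpa [smul_eq_mul] using this.symm
  have hv : ∀ i, ∑ j, ((A i j : ℝ) : ℂ) * v j = μ * v i := by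
    intro i
    have := hvB i
    rw [Matrix.mulVec, dotProduct] at this
    simpa [Matrix.map_apply, hBdef] using this
  -- gauge
  obtain ⟨g, hg1, hgpos⟩ := hbal
  have hgg : ∀ i, g i * g i = 1 := by
    intro i; rcases hg1 i with h | h <;> rw [h] <;> norm_num
  have hgabs : ∀ i, |g i| = 1 := by
    intro i; rcases hg1 i with h | h <;> simp [h]
  have habs : ∀ i j, g i * W i j * g j = |W i j| := by
    intro i j
    have h1 : |g i * W i j * g j| = |W i j| := by
      rw [abs_mul, abs_mul, hgabs, hgabs, one_mul, mul_one]
    rw [← h1, abs_of_nonneg (hgpos i j)]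
  have hgW : ∀ i j, g i * W i j = |W i j| * g j := by
    intro i j
    calc g i * W i j = g i * W i j * (g j * g j) := by rw [hgg j, mul_one]
    _ = g i * W i j * g j * g j := by ring
    _ = |W i j| * g j := by rw [habs i j]
  set y : Fin n → ℂ := fun i => ((g i : ℝ) : ℂ) * v i with hy
  have hterm : ∀ i j, ((|W i j| : ℝ) : ℂ) * y j
      = (if i = j then ((d i : ℝ) : ℂ) * y i else 0)
        - ((g i : ℝ) : ℂ) * ((A i j : ℝ) : ℂ) * v j := by
    intro i j
    by_cases hij : i = j
    · subst hij
      rw [hA i i, if_pos rfl, hdiag i]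
      simp [hy]
      ring
    · simp only [hA i j, if_neg hij]
      have hgwC : ((g i : ℝ) : ℂ) * ((W i j : ℝ) : ℂ)
          = ((|W i j| : ℝ) : ℂ) * ((g j : ℝ) : ℂ) := by
        exact_mod_cast congrArg (Complex.ofReal : ℝ → ℂ) (hgW i j)
      simp only [hy]
      push_cast
      linear_combination (-(v j)) * hgwC
  have key : ∀ i, (((d i : ℝ) : ℂ) - μ) * y i = ∑ j, ((|W i j| : ℝ) : ℂ) * y j := by
    intro i
    have hsplit : ∑ j, ((|W i j| : ℝ) : ℂ) * y j
        = (∑ j, if i = j then ((d i : ℝ) : ℂ) * y i else 0)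
          - ∑ j, ((g i : ℝ) : ℂ) * ((A i j : ℝ) : ℂ) * v j := by
      rw [← Finset.sum_sub_distrib]
      exact Finset.sum_congr rfl fun j _ => hterm i j
    rw [hsplit, Finset.sum_ite_eq Finset.univ i fun _ => ((d i : ℝ) : ℂ) * y i]
    have hmulsum : ∑ j, ((g i : ℝ) : ℂ) * ((A i j : ℝ) : ℂ) * v j
        = ((g i : ℝ) : ℂ) * (μ * v i) := by
      rw [← hv i, Finset.mul_sum]
      exact Finset.sum_congr rfl fun j _ => by ring
    rw [hmulsum]
    simp only [Finset.mem_univ, if_pos, hy]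
    ring
  -- maximal coordinate
  have hvex : ∃ i, v i ≠ 0 := by
    by_contra hc; push_neg at hc; exact hv0 (funext hc)
  obtain ⟨iw, hiw⟩ := hvex
  obtain ⟨i₀, -, hmax0⟩ := Finset.exists_max_image Finset.univ (fun i => ‖y i‖)
    ⟨iw, Finset.mem_univ _⟩
  set m0 : ℝ := ‖y i₀‖ with hm0def
  have hmax : ∀ i, ‖y i‖ ≤ m0 := fun i => hmax0 i (Finset.mem_univ i)
  have hm0 : 0 < m0 := by
    have hyiw : y iw ≠ 0 := by
      have hgne : ((g iw : ℝ) : ℂ) ≠ 0 := by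
        simp only [ne_eq, Complex.ofReal_eq_zero]
        rcases hg1 iw with h | h <;> rw [h] <;> norm_num
      exact mul_ne_zero hgne hiw
    exact lt_of_lt_of_le (norm_pos_iff.mpr hyiw) (hmax iw)
  have hrd : ∀ i, r i ≤ d i := by
    intro i
    have h := hkge i
    simp only [deltaVec] at h
    rw [Finset.sum_sub_distrib] at h
    simp only [hd, hr]
    linarith
  have hr0 : ∀ i, 0 ≤ r i := fun i => Finset.sum_nonneg fun j _ => abs_nonneg _
  have hd0 : ∀ i, 0 ≤ d i := fun i => le_trans (hr0 i) (hrd i)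
  have hnormsum : ∀ i, ‖∑ j, ((|W i j| : ℝ) : ℂ) * y j‖ ≤ r i * m0 := by
    intro i
    calc ‖∑ j, ((|W i j| : ℝ) : ℂ) * y j‖ ≤ ∑ j, ‖((|W i j| : ℝ) : ℂ) * y j‖ :=
          norm_sum_le _ _
    _ = ∑ j, |W i j| * ‖y j‖ := by
          refine Finset.sum_congr rfl fun j _ => ?_
          rw [norm_mul, Complex.norm_real, Real.norm_eq_abs, abs_abs]
    _ ≤ ∑ j, |W i j| * m0 :=
          Finset.sum_le_sum fun j _ => mul_le_mul_of_nonneg_left (hmax j) (abs_nonneg _)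
    _ = r i * m0 := by rw [hr, ← Finset.sum_mul]
  -- μ = 0
  have h1 : ‖((d i₀ : ℝ) : ℂ) - μ‖ * m0 ≤ r i₀ * m0 := by
    rw [hm0def, ← norm_mul, key i₀]
    exact hnormsum i₀
  have h3 : ‖((d i₀ : ℝ) : ℂ) - μ‖ ≤ d i₀ := by
    have := h1.trans (mul_le_mul_of_nonneg_right (hrd i₀) hm0.le)
    exact le_of_mul_le_mul_right this hm0
  have h2 : d i₀ - μ.re ≤ ‖((d i₀ : ℝ) : ℂ) - μ‖ := by
    have habsre := Complex.abs_re_le_norm (((d i₀ : ℝ) : ℂ) - μ)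
    have hre' : (((d i₀ : ℝ) : ℂ) - μ).re = d i₀ - μ.re := by simp
    calc d i₀ - μ.re ≤ |d i₀ - μ.re| := le_abs_self _
    _ = |(((d i₀ : ℝ) : ℂ) - μ).re| := by rw [hre']
    _ ≤ ‖((d i₀ : ℝ) : ℂ) - μ‖ := habsre
  have hre0' : 0 ≤ μ.re := by linarith [h2.trans h3]
  have hμre : μ.re = 0 := le_antisymm hre0 hre0'
  have hμim : μ.im = 0 := by
    have hsq : ‖((d i₀ : ℝ) : ℂ) - μ‖ ^ 2 = (d i₀ - μ.re) ^ 2 + μ.im ^ 2 := by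
      rw [Complex.sq_norm, Complex.normSq_apply]
      simp
      ring
    have h4 : ‖((d i₀ : ℝ) : ℂ) - μ‖ ^ 2 ≤ d i₀ ^ 2 := by
      nlinarith [norm_nonneg (((d i₀ : ℝ) : ℂ) - μ)]
    rw [hμre, sub_zero] at hsq
    have h5 : μ.im ^ 2 ≤ 0 := by nlinarith [hsq, h4]
    have h6 : μ.im ^ 2 = 0 := le_antisymm h5 (sq_nonneg _)
    exact (pow_eq_zero_iff two_ne_zero).mp h6
  have hμ0 : μ = 0 := Complex.ext hμre hμim
  have key0 : ∀ i, ((d i : ℝ) : ℂ) * y i = ∑ j, ((|W i j| : ℝ) : ℂ) * y j := by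
    intro i
    have := key i
    rwa [hμ0, sub_zero] at this
  -- propagation
  have hstep : ∀ i, ‖y i‖ = m0 →
      (k i = deltaVec W i ∧ ∀ j, W i j ≠ 0 → ‖y j‖ = m0) := by
    intro i hi
    have e1 : d i * m0 = ‖∑ j, ((|W i j| : ℝ) : ℂ) * y j‖ := by
      rw [← key0 i, norm_mul, Complex.norm_real, Real.norm_eq_abs,
        abs_of_nonneg (hd0 i), hi]
    have e3 : ‖∑ j, ((|W i j| : ℝ) : ℂ) * y j‖ ≤ ∑ j, |W i j| * ‖y j‖ := by
      refine (norm_sum_le _ _).trans (le_of_eq ?_)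
      refine Finset.sum_congr rfl fun j _ => ?_
      rw [norm_mul, Complex.norm_real, Real.norm_eq_abs, abs_abs]
    have e5 : ∑ j, |W i j| * ‖y j‖ ≤ r i * m0 := by
      calc ∑ j, |W i j| * ‖y j‖ ≤ ∑ j, |W i j| * m0 :=
            Finset.sum_le_sum fun j _ => mul_le_mul_of_nonneg_left (hmax j) (abs_nonneg _)
      _ = r i * m0 := by rw [hr, ← Finset.sum_mul]
    have e6 : r i * m0 ≤ d i * m0 := mul_le_mul_of_nonneg_right (hrd i) hm0.le
    have e4 : d i * m0 ≤ ∑ j, |W i j| * ‖y j‖ := (le_of_eq e1).trans e3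
    have heq1 : ∑ j, |W i j| * ‖y j‖ = r i * m0 := le_antisymm e5 (by linarith)
    have heqrd : r i = d i := by
      have h7 : r i * m0 = d i * m0 := le_antisymm e6 (by linarith)
      exact mul_right_cancel₀ (ne_of_gt hm0) h7
    constructor
    · simp only [deltaVec]
      rw [Finset.sum_sub_distrib]
      simp only [hd, hr] at heqrd
      linarith
    · intro j0 hWj
      have hzero : ∑ j, |W i j| * (m0 - ‖y j‖) = 0 := by
        have h8 : ∑ j, |W i j| * (m0 - ‖y j‖)
            = r i * m0 - ∑ j, |W i j| * ‖y j‖ := by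
          simp only [mul_sub]
          rw [Finset.sum_sub_distrib, hr, Finset.sum_mul]
        rw [h8, heq1]; ring
      have hterm0 := (Finset.sum_eq_zero_iff_of_nonneg
        (fun j _ => mul_nonneg (abs_nonneg _) (sub_nonneg.mpr (hmax j)))).mp hzero j0
        (Finset.mem_univ j0)
      rcases mul_eq_zero.mp hterm0 with hc | hc
      · exact absurd (abs_eq_zero.mp hc) hWj
      · exact (sub_eq_zero.mp hc).symm
  have hall : ∀ i, ‖y i‖ = m0 := by
    intro i
    have hpath := hsc i₀ i
    induction hpath with
    | refl => rfl
    | tail hab hbc ih => exact (hstep _ ih).2 _ hbc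
  exact hkne (funext fun i => (hstep i (hall i)).1)

theorem directed_compensated_trivial_consensus_of_ge_delta
    {n : ℕ} (W : Matrix (Fin n) (Fin n) ℝ) (hdiag : ∀ i, W i i = 0)
    (hsc : StronglyConnected W) (hbal : StructurallyBalanced W)
    (L : Matrix (Fin n) (Fin n) ℝ) (hLdef : L = signedLaplacian W)
    (k : Fin n → ℝ) (hk0 : ∀ i, 0 ≤ k i)
    (hkge : ∀ i, deltaVec W i ≤ k i) (hkne : k ≠ deltaVec W) :
    (∀ μ ∈ spectrum ℂ ((L + Matrix.diagonal k).map (Complex.ofReal : ℝ → ℂ)),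
      0 < μ.re) ∧
    (∀ x0 : Fin n → ℝ, Filter.Tendsto
      (fun t : ℝ => (NormedSpace.exp ((-t) • (L + Matrix.diagonal k))).mulVec x0)
      Filter.atTop (nhds 0)) := by
  subst hLdef
  have hspec := spec_re_pos_aux W hdiag hsc hbal k hkge hkne
  refine ⟨hspec, ?_⟩
  intro x0
  set A : Matrix (Fin n) (Fin n) ℝ := signedLaplacian W + Matrix.diagonal k with hAdef
  set B : Matrix (Fin n) (Fin n) ℂ := A.map (Complex.ofReal : ℝ → ℂ) with hBdef
  letI : SeminormedRing (Matrix (Fin n) (Fin n) ℝ) := Matrix.linftyOpSemiNormedRing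
  letI : NormedRing (Matrix (Fin n) (Fin n) ℝ) := Matrix.linftyOpNormedRing
  letI : NormedAlgebra ℝ (Matrix (Fin n) (Fin n) ℝ) := Matrix.linftyOpNormedAlgebra
  letI : SeminormedRing (Matrix (Fin n) (Fin n) ℂ) := Matrix.linftyOpSemiNormedRing
  letI : NormedRing (Matrix (Fin n) (Fin n) ℂ) := Matrix.linftyOpNormedRing
  letI : NormedAlgebra ℝ (Matrix (Fin n) (Fin n) ℂ) := Matrix.linftyOpNormedAlgebra
  letI : NormedAlgebra ℂ (Matrix (Fin n) (Fin n) ℂ) := Matrix.linftyOpNormedAlgebra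
  letI : NormedAlgebra ℚ (Matrix (Fin n) (Fin n) ℝ) := .restrictScalars ℚ ℝ _
  have hmapexp : ∀ t : ℝ, (NormedSpace.exp ((-t) • A)).map (Complex.ofReal : ℝ → ℂ)
      = NormedSpace.exp ((-(t : ℂ)) • B) := by
    intro t
    have hcont : Continuous (Complex.ofRealHom.mapMatrix :
        Matrix (Fin n) (Fin n) ℝ →+* Matrix (Fin n) (Fin n) ℂ) :=
      continuous_id.matrix_map Complex.continuous_ofReal
    have h1 : (Complex.ofRealHom.mapMatrix : Matrix (Fin n) (Fin n) ℝ →+* _)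
          (NormedSpace.exp ((-t) • A))
        = NormedSpace.exp ((Complex.ofRealHom.mapMatrix :
            Matrix (Fin n) (Fin n) ℝ →+* _) ((-t) • A)) :=
      NormedSpace.map_exp _ hcont _
    have h2 : (Complex.ofRealHom.mapMatrix : Matrix (Fin n) (Fin n) ℝ →+* _) ((-t) • A)
        = (-(t : ℂ)) • B := by
      ext i j
      simp [Matrix.map_apply, hBdef, Matrix.smul_apply, RingHom.mapMatrix_apply]
    have h3 : NormedSpace.exp ((-(t : ℂ)) • B) = NormedSpace.exp ((-(t : ℂ)) • B) :=
      rfl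
    calc (NormedSpace.exp ((-t) • A)).map (Complex.ofReal : ℝ → ℂ)
        = (Complex.ofRealHom.mapMatrix : Matrix (Fin n) (Fin n) ℝ →+* _)
            (NormedSpace.exp ((-t) • A)) := rfl
    _ = NormedSpace.exp ((-(t : ℂ)) • B) := by rw [h1, h2]
    _ = NormedSpace.exp ((-(t : ℂ)) • B) := h3
  have hcoord : ∀ (t : ℝ) (i : Fin n),
      ((((NormedSpace.exp ((-t) • A)).mulVec x0) i : ℝ) : ℂ)
        = (NormedSpace.exp ((-(t : ℂ)) • B)).mulVec (fun j => ((x0 j : ℝ) : ℂ)) i := by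
    intro t i
    rw [← hmapexp t]
    simp only [Matrix.mulVec, dotProduct, Matrix.map_apply]
    push_cast
    rfl

  have htarget := complex_decay_aux B hspec (fun j => ((x0 j : ℝ) : ℂ))
  rw [tendsto_pi_nhds]
  intro i
  have hci : Filter.Tendsto (fun t : ℝ =>
      (NormedSpace.exp ((-(t : ℂ)) • B)).mulVec (fun j => ((x0 j : ℝ) : ℂ)) i)
      Filter.atTop (nhds 0) := by
    have := tendsto_pi_nhds.mp htarget i
    simpa using this
  refine squeeze_zero_norm (fun t => ?_) (by simpa only [norm_zero] using hci.norm)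
  have he : ‖(((NormedSpace.exp ((-t) • A)).mulVec x0 i : ℝ) : ℂ)‖
      = ‖(NormedSpace.exp ((-t) • A)).mulVec x0 i‖ := Complex.norm_real _
  rw [← he, hcoord t i]
end

section
/- Let W define a strongly connected, structurally imbalanced, weight-balanced directed signed network with signed Laplacian L. Then there exists a compensation vector k′ ∈ ℝⁿ with 0 ≤ k′ ≤ δ entrywise and k′ ≠ δ such that every eigenvalue of the compensated Laplacian L + diag(k′) over ℂ has strictly positive real part, i.e., −(L + diag(k′)) is a stable (Hurwitz) matrix. -/
open Matrix Finset Filter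

/-! ### Auxiliary lemmas -/

lemma aux_qf_nonneg {n : ℕ} (M : Matrix (Fin n) (Fin n) ℝ)
    (h : ∀ x : Fin n → ℝ, x ≠ 0 → 0 < x ⬝ᵥ M.mulVec x) (x : Fin n → ℝ) :
    0 ≤ x ⬝ᵥ M.mulVec x := by
  by_cases hx : x = 0
  · simp [hx]
  · exact (h x hx).le

/-- If the (real) quadratic form of a real matrix is positive definite, then every
complex eigenvalue of the matrix has positive real part. -/
lemma aux_spectral_re_pos {n : ℕ} (M : Matrix (Fin n) (Fin n) ℝ)
    (h : ∀ x : Fin n → ℝ, x ≠ 0 → 0 < x ⬝ᵥ M.mulVec x) :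
    ∀ μ ∈ spectrum ℂ (M.map (Complex.ofReal : ℝ → ℂ)), 0 < μ.re := by
  intro μ hμ
  rw [spectrum.mem_iff, Matrix.isUnit_iff_isUnit_det, isUnit_iff_ne_zero, not_not] at hμ
  obtain ⟨v, hv, hv0⟩ := (Matrix.exists_mulVec_eq_zero_iff).mpr hμ
  rw [Algebra.algebraMap_eq_smul_one, Matrix.sub_mulVec, Matrix.smul_mulVec,
    Matrix.one_mulVec, sub_eq_zero] at hv0
  set a : Fin n → ℝ := fun j => (v j).re with ha
  set b : Fin n → ℝ := fun j => (v j).im with hb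
  have key : ∀ j, ∑ k, (M j k : ℂ) * v k = μ * v j := by
    intro j
    have := congrFun hv0 j
    simpa [Matrix.mulVec, dotProduct, Matrix.map_apply] using this.symm
  set S : ℝ := ∑ j, (a j ^ 2 + b j ^ 2) with hS
  have hSpos : 0 < S := by
    obtain ⟨j, hj⟩ := Function.ne_iff.mp hv
    refine Finset.sum_pos' (fun i _ => by positivity) ⟨j, Finset.mem_univ j, ?_⟩
    have : a j ≠ 0 ∨ b j ≠ 0 := by
      by_contra hc
      push_neg at hc
      exact hj (Complex.ext hc.1 hc.2)
    rcases this with h1 | h1 <;> positivity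
  have main : μ.re * S = a ⬝ᵥ M.mulVec a + b ⬝ᵥ M.mulVec b := by
    have h1 : (∑ j, (starRingEnd ℂ) (v j) * (μ * v j)).re = μ.re * S := by
      rw [Complex.re_sum, hS, Finset.mul_sum]
      refine Finset.sum_congr rfl fun j _ => ?_
      simp [Complex.mul_re, Complex.conj_re, Complex.conj_im, ha, hb]
      ring
    have h2 : (∑ j, (starRingEnd ℂ) (v j) * (∑ k, (M j k : ℂ) * v k)).re
        = a ⬝ᵥ M.mulVec a + b ⬝ᵥ M.mulVec b := by
      rw [Complex.re_sum]
      have : ∀ j, ((starRingEnd ℂ) (v j) * (∑ k, (M j k : ℂ) * v k)).re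
          = ∑ k, M j k * (a j * a k + b j * b k) := by
        intro j
        rw [Finset.mul_sum, Complex.re_sum]
        refine Finset.sum_congr rfl fun k _ => ?_
        simp [Complex.mul_re, Complex.mul_im, Complex.conj_re, Complex.conj_im, ha, hb]
        ring
      rw [Finset.sum_congr rfl fun j _ => this j]
      simp only [dotProduct, Matrix.mulVec, Finset.mul_sum, Finset.sum_add_distrib,
        ← Finset.sum_add_distrib]
      refine Finset.sum_congr rfl fun j _ => ?_
      refine Finset.sum_congr rfl fun k _ => by ring
    have e : (∑ j, (starRingEnd ℂ) (v j) * (∑ k, (M j k : ℂ) * v k))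
        = ∑ j, (starRingEnd ℂ) (v j) * (μ * v j) :=
      Finset.sum_congr rfl fun j _ => by rw [key j]
    rw [← h1, ← h2, e]
  have hQ : 0 < a ⬝ᵥ M.mulVec a + b ⬝ᵥ M.mulVec b := by
    obtain ⟨j, hj⟩ := Function.ne_iff.mp hv
    have : a ≠ 0 ∨ b ≠ 0 := by
      by_contra hc
      push_neg at hc
      apply hj
      exact Complex.ext (congrFun hc.1 j) (congrFun hc.2 j)
    rcases this with h1 | h1
    · have := h a h1
      have := aux_qf_nonneg M h b
      linarith
    · have := h b h1
      have := aux_qf_nonneg M h a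
      linarith
  nlinarith [main, hSpos, hQ]

/-- The quadratic-form identity for `L + diag δ`, using weight balance. -/
lemma aux_qf_id {n : ℕ} (W : Matrix (Fin n) (Fin n) ℝ) (hdiag : ∀ i, W i i = 0)
    (hwb : ∀ i, ∑ j, |W i j| = ∑ j, |W j i|) (x : Fin n → ℝ) :
    2 * (x ⬝ᵥ (signedLaplacian W + Matrix.diagonal (deltaVec W)).mulVec x)
      = ∑ i, ∑ j, (|W i j| * (x i ^ 2 + x j ^ 2) - 2 * W i j * (x i * x j)) := by
  have hA : ∀ i j, (signedLaplacian W + Matrix.diagonal (deltaVec W)) i j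
      = (if i = j then ∑ k, |W i k| else 0) - W i j := by
    intro i j
    by_cases hij : i = j
    · subst hij
      simp [signedLaplacian, deltaVec, Matrix.add_apply, hdiag i, Finset.sum_sub_distrib]
    · simp [signedLaplacian, Matrix.add_apply, Matrix.diagonal_apply_ne _ hij, hij]
  have step1 : x ⬝ᵥ (signedLaplacian W + Matrix.diagonal (deltaVec W)).mulVec x
      = (∑ i, ∑ j, |W i j| * x i ^ 2) - ∑ i, ∑ j, W i j * (x i * x j) := by
    simp only [dotProduct, Matrix.mulVec, hA]
    rw [← Finset.sum_sub_distrib]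
    refine Finset.sum_congr rfl fun i _ => ?_
    have inner : (∑ j, ((if i = j then ∑ k, |W i k| else 0) - W i j) * x j)
        = (∑ k, |W i k|) * x i - ∑ j, W i j * x j := by
      rw [show (∑ j, ((if i = j then ∑ k, |W i k| else 0) - W i j) * x j)
          = ∑ j, ((if i = j then (∑ k, |W i k|) * x j else 0) - W i j * x j) from
        Finset.sum_congr rfl fun j _ => by by_cases h : i = j <;> simp [h] <;> ring,
        Finset.sum_sub_distrib, Finset.sum_ite_eq]
      simp
    rw [inner, mul_sub, Finset.mul_sum]
    congr 1
    · rw [show x i * ((∑ k, |W i k|) * x i) = (∑ k, |W i k|) * x i ^ 2 by ring,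
        Finset.sum_mul]
    · exact Finset.sum_congr rfl fun j _ => by ring
  have h1 : ∑ i, ∑ j, |W i j| * x j ^ 2 = ∑ i, ∑ j, |W i j| * x i ^ 2 := by
    rw [Finset.sum_comm]
    refine Finset.sum_congr rfl fun i _ => ?_
    rw [← Finset.sum_mul, ← Finset.sum_mul, ← hwb i]
  have h2 : ∑ i, ∑ j, (|W i j| * (x i ^ 2 + x j ^ 2) - 2 * W i j * (x i * x j))
      = (∑ i, ∑ j, |W i j| * x i ^ 2) + (∑ i, ∑ j, |W i j| * x j ^ 2)
        - 2 * ∑ i, ∑ j, W i j * (x i * x j) := by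
    rw [Finset.mul_sum, ← Finset.sum_add_distrib, ← Finset.sum_sub_distrib]
    refine Finset.sum_congr rfl fun i _ => ?_
    rw [Finset.mul_sum, ← Finset.sum_add_distrib, ← Finset.sum_sub_distrib]
    exact Finset.sum_congr rfl fun j _ => by ring
  rw [step1, h2, h1]
  ring

/-- Positivity of the symmetrized quadratic form, from strong connectivity and
structural imbalance. -/
lemma aux_sum_pos_of_imbal {n : ℕ} (W : Matrix (Fin n) (Fin n) ℝ)
    (hsc : StronglyConnected W) (himbal : ¬ StructurallyBalanced W)
    (x : Fin n → ℝ) (hx : x ≠ 0) :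
    0 < ∑ i, ∑ j, (|W i j| * (x i ^ 2 + x j ^ 2) - 2 * W i j * (x i * x j)) := by
  set U : Fin n → Fin n → ℝ :=
    fun i j => |W i j| * (x i ^ 2 + x j ^ 2) - 2 * W i j * (x i * x j) with hU
  have hUnn : ∀ i j, 0 ≤ U i j := by
    intro i j
    rcases le_or_gt 0 (W i j) with h | h
    · simp only [hU, abs_of_nonneg h]
      nlinarith [sq_nonneg (x i - x j)]
    · simp only [hU, abs_of_neg h]
      nlinarith [sq_nonneg (x i + x j)]
  have hnn : 0 ≤ ∑ i, ∑ j, U i j :=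
    Finset.sum_nonneg fun i _ => Finset.sum_nonneg fun j _ => hUnn i j
  rcases hnn.lt_or_eq with h | h
  · exact h
  exfalso
  have hzero : ∀ i j, U i j = 0 := by
    intro i j
    have h0 := (Finset.sum_eq_zero_iff_of_nonneg
      (fun i _ => Finset.sum_nonneg fun j _ => hUnn i j)).mp h.symm i (Finset.mem_univ i)
    exact (Finset.sum_eq_zero_iff_of_nonneg (fun j _ => hUnn i j)).mp h0 j (Finset.mem_univ j)
  have hpos : ∀ i j, 0 < W i j → x i = x j := by
    intro i j h
    have := hzero i j
    simp only [hU, abs_of_pos h] at this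
    have h2 : W i j * (x i - x j) ^ 2 = 0 := by nlinarith
    have := (mul_eq_zero.mp h2).resolve_left (ne_of_gt h)
    have := pow_eq_zero_iff (n := 2) (by norm_num) |>.mp this
    linarith
  have hneg : ∀ i j, W i j < 0 → x i = -x j := by
    intro i j h
    have := hzero i j
    simp only [hU, abs_of_neg h] at this
    have h2 : (-W i j) * (x i + x j) ^ 2 = 0 := by nlinarith
    have := (mul_eq_zero.mp h2).resolve_left (by linarith)
    have := pow_eq_zero_iff (n := 2) (by norm_num) |>.mp this
    linarith
  have hsq : ∀ i j, W i j ≠ 0 → x i ^ 2 = x j ^ 2 := by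
    intro i j h
    rcases h.lt_or_gt with h | h
    · rw [hneg i j h]; ring
    · rw [hpos i j h]
  have hall : ∀ i j, x i ^ 2 = x j ^ 2 := by
    intro i j
    induction hsc i j with
    | refl => rfl
    | tail _ e ih => exact ih.trans (hsq _ _ e)
  obtain ⟨i0, hi0⟩ := Function.ne_iff.mp hx
  have hnz : ∀ i, x i ≠ 0 := by
    intro i hzero'
    apply hi0
    have := hall i i0
    rw [hzero'] at this
    have h2 : x i0 ^ 2 = 0 := by simpa using this.symm
    exact pow_eq_zero_iff (n := 2) (by norm_num) |>.mp h2
  apply himbal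
  refine ⟨fun i => if 0 < x i then 1 else -1,
    fun i => by by_cases h : 0 < x i <;> simp [h], ?_⟩
  intro i j
  rcases lt_trichotomy (W i j) 0 with h | h | h
  · have hij := hneg i j h
    have hxj := hnz j
    by_cases hj : 0 < x j
    · have : ¬ 0 < x i := by rw [hij]; linarith
      simp only [this, hj, if_true, if_false]
      nlinarith
    · have hjneg : x j < 0 := lt_of_le_of_ne (not_lt.mp hj) hxj
      have : 0 < x i := by rw [hij]; linarith
      simp only [this, hj, if_true, if_false]
      nlinarith
  · simp [h]
  · have hij := hpos i j h
    have hxj := hnz j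
    by_cases hj : 0 < x j
    · have : 0 < x i := by rw [hij]; exact hj
      simp only [this, hj, if_true]
      nlinarith
    · have : ¬ 0 < x i := by rw [hij]; exact hj
      simp only [this, hj, if_false]
      nlinarith

/-- A positive-definite quadratic form admits a uniform lower bound on the sphere. -/
lemma aux_qf_lower {n : ℕ} (hn : 0 < n) (M : Matrix (Fin n) (Fin n) ℝ)
    (h : ∀ x : Fin n → ℝ, x ≠ 0 → 0 < x ⬝ᵥ M.mulVec x) :
    ∃ m > 0, ∀ x : Fin n → ℝ, m * ‖x‖ ^ 2 ≤ x ⬝ᵥ M.mulVec x := by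
  set f : (Fin n → ℝ) → ℝ := fun x => x ⬝ᵥ M.mulVec x with hf
  have hcont : Continuous f := by
    show Continuous fun x : Fin n → ℝ => ∑ i, x i * ∑ j, M i j * x j
    exact continuous_finset_sum _ fun i _ =>
      (continuous_apply i).mul
        (continuous_finset_sum _ fun j _ => continuous_const.mul (continuous_apply j))
  haveI : Nonempty (Fin n) := ⟨⟨0, hn⟩⟩
  haveI : Nontrivial (Fin n → ℝ) := inferInstance
  have hne : (Metric.sphere (0 : Fin n → ℝ) 1).Nonempty :=
    NormedSpace.sphere_nonempty.mpr zero_le_one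
  obtain ⟨x0, hx0mem, hmin⟩ :=
    (isCompact_sphere (0 : Fin n → ℝ) 1).exists_isMinOn hne hcont.continuousOn
  have hx0norm : ‖x0‖ = 1 := by simpa using hx0mem
  have hx0ne : x0 ≠ 0 := by
    intro hc; rw [hc] at hx0norm; simp at hx0norm
  refine ⟨f x0, h x0 hx0ne, fun x => ?_⟩
  by_cases hx : x = 0
  · simp [hx, hf]
  · have hnx : (0:ℝ) < ‖x‖ := norm_pos_iff.mpr hx
    set u : Fin n → ℝ := ‖x‖⁻¹ • x with hu
    have hunorm : ‖u‖ = 1 := by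
      rw [hu, norm_smul, norm_inv, norm_norm, inv_mul_cancel₀ hnx.ne']
    have humem : u ∈ Metric.sphere (0 : Fin n → ℝ) 1 := by simp [hunorm]
    have hxu : x = ‖x‖ • u := by
      rw [hu, smul_smul, mul_inv_cancel₀ hnx.ne', one_smul]
    have hscale : f (‖x‖ • u) = ‖x‖ ^ 2 * f u := by
      simp only [hf]
      rw [Matrix.mulVec_smul, smul_dotProduct, dotProduct_smul, smul_eq_mul, smul_eq_mul]
      ring
    have hmu : f x0 ≤ f u := hmin humem
    calc f x0 * ‖x‖ ^ 2 ≤ f u * ‖x‖ ^ 2 := mul_le_mul_of_nonneg_right hmu (sq_nonneg _)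
      _ = f x := by rw [mul_comm, ← hscale, ← hxu]

lemma aux_qf_diag {n : ℕ} (d x : Fin n → ℝ) :
    x ⬝ᵥ (Matrix.diagonal d).mulVec x = ∑ i, d i * x i ^ 2 := by
  simp only [dotProduct, Matrix.mulVec_diagonal]
  exact Finset.sum_congr rfl fun i _ => by ring

theorem directed_imbalanced_stabilizable_below_delta
    {n : ℕ} (W : Matrix (Fin n) (Fin n) ℝ) (hdiag : ∀ i, W i i = 0)
    (hsc : StronglyConnected W) (himbal : ¬ StructurallyBalanced W)
    (hwb : ∀ i, ∑ j, |W i j| = ∑ j, |W j i|)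
    (L : Matrix (Fin n) (Fin n) ℝ) (hLdef : L = signedLaplacian W) :
    ∃ k' : Fin n → ℝ, (∀ i, 0 ≤ k' i) ∧ (∀ i, k' i ≤ deltaVec W i) ∧
      k' ≠ deltaVec W ∧
      (∀ μ ∈ spectrum ℂ ((L + Matrix.diagonal k').map (Complex.ofReal : ℝ → ℂ)),
        0 < μ.re) := by
  subst hLdef
  have hnegentry : ∃ i j, W i j < 0 := by
    by_contra hc
    push_neg at hc
    exact himbal ⟨fun _ => 1, fun i => Or.inl rfl, fun i j => by simpa using hc i j⟩
  obtain ⟨i0, j0, hW0⟩ := hnegentry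
  have hn : 0 < n := i0.pos
  have hδnn : ∀ i, 0 ≤ deltaVec W i :=
    fun i => Finset.sum_nonneg fun j _ => by simp [sub_nonneg, le_abs_self]
  have hδ0 : 0 < deltaVec W i0 :=
    Finset.sum_pos' (fun j _ => by simp [sub_nonneg, le_abs_self])
      ⟨j0, Finset.mem_univ j0, by rw [abs_of_neg hW0]; linarith⟩
  set A0 := signedLaplacian W + Matrix.diagonal (deltaVec W) with hA0
  have hQpos : ∀ x : Fin n → ℝ, x ≠ 0 → 0 < x ⬝ᵥ A0.mulVec x := by
    intro x hx
    have h1 := aux_qf_id W hdiag hwb x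
    have h2 := aux_sum_pos_of_imbal W hsc himbal x hx
    rw [← h1] at h2
    linarith
  obtain ⟨m, hm, hlow⟩ := aux_qf_lower hn A0 hQpos
  set ε := min (deltaVec W i0) m / 2 with hε
  have hminpos : 0 < min (deltaVec W i0) m := lt_min hδ0 hm
  have hεpos : 0 < ε := by rw [hε]; linarith
  have hεδ : ε ≤ deltaVec W i0 := by
    have := min_le_left (deltaVec W i0) m
    rw [hε]; linarith
  have hεm : ε < m := by
    have := min_le_right (deltaVec W i0) m
    rw [hε]; linarith
  set k' : Fin n → ℝ := fun i => if i = i0 then deltaVec W i0 - ε else deltaVec W i with hk'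
  have hdsum : Matrix.diagonal k'
      = Matrix.diagonal (deltaVec W) + Matrix.diagonal (fun i => if i = i0 then -ε else 0) := by
    ext i j
    by_cases hij : i = j
    · subst hij
      by_cases h : i = i0 <;>
        simp [Matrix.add_apply, Matrix.diagonal_apply_eq, hk', h] <;> ring
    · simp [Matrix.add_apply, Matrix.diagonal_apply_ne _ hij]
  refine ⟨k', ?_, ?_, ?_, ?_⟩
  · intro i
    by_cases h : i = i0
    · simp only [hk', h, if_true]; linarith
    · simp only [hk', h, if_false]; exact hδnn i
  · intro i
    by_cases h : i = i0
    · simp only [hk', h, if_true]; linarith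
    · simp only [hk', h, if_false]; exact le_refl _
  · intro hc
    have := congrFun hc i0
    simp only [hk', if_true] at this
    linarith
  · apply aux_spectral_re_pos
    intro x hx
    have hsplit : x ⬝ᵥ (signedLaplacian W + Matrix.diagonal k').mulVec x
        = x ⬝ᵥ A0.mulVec x - ε * x i0 ^ 2 := by
      rw [hdsum, ← add_assoc, ← hA0, Matrix.add_mulVec, dotProduct_add, aux_qf_diag]
      rw [show (∑ i, (if i = i0 then -ε else 0) * x i ^ 2) = -ε * x i0 ^ 2 by
        rw [Finset.sum_eq_single i0 (fun b _ hb => by simp [hb]) (by simp)]; simp]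
      ring
    rw [hsplit]
    have h1 := hlow x
    have h2 : x i0 ^ 2 ≤ ‖x‖ ^ 2 := by
      have hle : |x i0| ≤ ‖x‖ := by
        have := norm_le_pi_norm x i0
        simpa [Real.norm_eq_abs] using this
      calc x i0 ^ 2 = |x i0| ^ 2 := (sq_abs _).symm
        _ ≤ ‖x‖ ^ 2 := by
          apply pow_le_pow_left₀ (abs_nonneg _) hle
    have hnx : 0 < ‖x‖ := norm_pos_iff.mpr hx
    have h3 : ε * x i0 ^ 2 ≤ ε * ‖x‖ ^ 2 := mul_le_mul_of_nonneg_left h2 hεpos.le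
    have h4 : 0 < m * ‖x‖ ^ 2 - ε * ‖x‖ ^ 2 := by
      nlinarith [mul_pos (sub_pos.mpr hεm) (pow_pos hnx 2)]
    linarith
end
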